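/- arXiv:math/0611497 — 6 statements merged into one kernel-verified Lean document; each statement's English description precedes it below -/
import Mathlib

section
/- Let V be a Banach space and P = (P_t)_{t≥0} a one-parameter semigroup of bounded operators on V (P_0 = id, P_{s+t} = P_s ∘ P_t). Suppose that sup over t ∈ [0,1] of ‖P_t‖ < ∞ and P_t x → x weakly as t → 0⁺ for every x ∈ V. Then P is a C₀-semigroup, i.e. P_t x → x in norm as t → 0⁺ for every x ∈ V. -/
open Filter MeasureTheory Set TopologicalSpace ENNReal NNReal

section Aux

variable {V : Type*} [NormedAddCommGroup V] [NormedSpace ℂ V]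

/-- Separation of a point from a closed complex subspace by a functional vanishing on it. -/
lemma aux_sep (W : Submodule ℂ V) (hW : IsClosed (W : Set V)) {x : V} (hx : x ∉ W) :
    ∃ f : V →L[ℂ] ℂ, (∀ w ∈ W, f w = 0) ∧ f x ≠ 0 := by
  obtain ⟨f, u, hfx, hfW⟩ :=
    RCLike.geometric_hahn_banach_point_closed (𝕜 := ℂ)
      ((W.restrictScalars ℝ).convex) hW hx
  have hu0 : u < 0 := by simpa using hfW 0 W.zero_mem
  refine ⟨f, ?_, ?_⟩
  · intro w hw
    by_contra hfw
    have hmem : ((u - 1 : ℝ) / f w : ℂ) • w ∈ W := W.smul_mem _ hw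
    have := hfW _ hmem
    rw [_root_.map_smul, smul_eq_mul, div_mul_cancel₀ _ hfw] at this
    simp at this
    linarith
  · intro h
    rw [h] at hfx
    simp at hfx
    linarith


/-- Pettis measurability -/
lemma aux_meas (W : Submodule ℂ V) (hWs : IsSeparable (W : Set V)) (G : ℝ → V)
    (hmem : ∀ s, G s ∈ W) (hscal : ∀ φ : V →L[ℂ] ℂ, Measurable (fun s => φ (G s))) :
    StronglyMeasurable G := by
  classical
  haveI : Nonempty (W : Set V) := ⟨⟨0, W.zero_mem⟩⟩
  haveI : SeparableSpace (W : Set V) := hWs.separableSpace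
  obtain ⟨T₀, hT₀c, hT₀d⟩ := exists_countable_dense (W : Set V)
  have hTc : (Subtype.val '' T₀ : Set V).Countable := hT₀c.image _
  have hTne : (Subtype.val '' T₀ : Set V).Nonempty := (hT₀d.nonempty).image _
  obtain ⟨u, hu⟩ := hTc.exists_eq_range hTne
  have huW : ∀ n, u n ∈ W := by
    intro n
    have : u n ∈ Subtype.val '' T₀ := hu ▸ mem_range_self n
    obtain ⟨b, _, hb⟩ := this
    exact hb ▸ b.2
  have happrox : ∀ v ∈ W, ∀ ε : ℝ, 0 < ε → ∃ n, ‖v - u n‖ < ε := by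
    intro v hv ε hε
    have : (⟨v, hv⟩ : (W : Set V)) ∈ closure T₀ := hT₀d _
    rw [Metric.mem_closure_iff] at this
    obtain ⟨b, hbT, hbd⟩ := this ε hε
    have : b.val ∈ Subtype.val '' T₀ := mem_image_of_mem _ hbT
    rw [hu] at this
    obtain ⟨n, hn⟩ := this
    refine ⟨n, ?_⟩
    rw [hn]
    rw [Subtype.dist_eq, dist_eq_norm] at hbd
    exact hbd
  choose f hf1 hf2 using fun n => exists_dual_vector'' ℂ (u n)
  have hfle : ∀ n (v : V), ‖f n v‖ ≤ ‖v‖ := by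
    intro n v
    calc ‖f n v‖ ≤ ‖f n‖ * ‖v‖ := (f n).le_opNorm v
    _ ≤ 1 * ‖v‖ := by gcongr; exact hf1 n
    _ = ‖v‖ := one_mul _
  have norming : ∀ v ∈ W, (‖v‖₊ : ℝ≥0∞) = ⨆ n, (‖f n v‖₊ : ℝ≥0∞) := by
    intro v hv
    apply le_antisymm
    · refine ENNReal.le_of_forall_pos_le_add fun ε hε _ => ?_
      obtain ⟨n, hn⟩ := happrox v hv (ε / 2) (by positivity)
      have hreal : ‖v‖ ≤ ‖f n v‖ + ε := by
        have h1 : ‖f n (u n)‖ = ‖u n‖ := by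
          rw [hf2 n]
          simp
        have h2 : ‖f n (u n) - f n v‖ ≤ ‖u n - v‖ := by
          rw [← map_sub]; exact hfle n _
        have h3 : ‖u n - v‖ = ‖v - u n‖ := norm_sub_rev _ _
        have h4 : ‖v‖ - ‖v - u n‖ ≤ ‖u n‖ := by
          have := norm_sub_norm_le v (u n)
          linarith [this]
        have h5 : ‖f n (u n)‖ - ‖f n (u n) - f n v‖ ≤ ‖f n v‖ := by
          have := norm_sub_norm_le (f n (u n)) (f n v)
          have h6 : ‖f n (u n)‖ - ‖f n v‖ ≤ ‖f n (u n) - f n v‖ := this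
          linarith
        have hc : (ε : ℝ) / 2 + ε / 2 ≤ ε := by
          rw [add_halves]
        nlinarith [NNReal.coe_pos.2 hε]
      calc (‖v‖₊ : ℝ≥0∞) ≤ (‖f n v‖₊ : ℝ≥0∞) + ε := by
            rw [← ENNReal.coe_add, ENNReal.coe_le_coe, ← NNReal.coe_le_coe]
            push_cast
            simpa using hreal
      _ ≤ (⨆ m, (‖f m v‖₊ : ℝ≥0∞)) + ε := by
            gcongr
            exact le_iSup (fun m => (‖f m v‖₊ : ℝ≥0∞)) n
    · refine iSup_le fun n => ?_
      rw [ENNReal.coe_le_coe, ← NNReal.coe_le_coe]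
      simpa using hfle n v
  have hdist : ∀ w ∈ W, Measurable fun s => ‖G s - w‖ := by
    intro w hw
    have key : (fun s => ‖G s - w‖) =
        fun s => (⨆ n, (‖f n (G s) - f n w‖₊ : ℝ≥0∞)).toReal := by
      funext s
      have := norming _ (W.sub_mem (hmem s) hw)
      simp only [map_sub] at this ⊢
      rw [← this]
      simp
    rw [key]
    apply Measurable.ennreal_toReal
    exact Measurable.iSup fun n =>
      (((hscal (f n)).sub measurable_const).nnnorm).coe_nnreal_ennreal
  borelize V
  refine stronglyMeasurable_iff_measurable_separable.2
    ⟨?_, hWs.mono (range_subset_iff.2 hmem)⟩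
  have hex : ∀ (k : ℕ) (s : ℝ), ∃ n, ‖G s - u n‖ < 1 / (k + 1) :=
    fun k s => happrox _ (hmem s) _ (by positivity)
  have hNmeas : ∀ k : ℕ, Measurable fun s => u (Nat.find (hex k s)) := by
    intro k
    apply measurable_from_top.comp
    apply measurable_to_countable'
    intro n
    have : (fun s => Nat.find (hex k s)) ⁻¹' {n} =
        {s | ‖G s - u n‖ < 1 / (k + 1)} ∩
          ⋂ (m : ℕ) (_ : m < n), {s | ¬ ‖G s - u m‖ < 1 / (k + 1)} := by
      ext s
      simp only [mem_preimage, mem_singleton_iff, Nat.find_eq_iff (hex k s), mem_inter_iff,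
        mem_setOf_eq, mem_iInter, not_lt]
    rw [this]
    refine MeasurableSet.inter ?_ (MeasurableSet.iInter fun m =>
      MeasurableSet.iInter fun _ => ?_)
    · exact measurableSet_lt (hdist _ (huW n)) measurable_const
    · exact (measurableSet_lt (hdist _ (huW m)) measurable_const).compl
  apply measurable_of_tendsto_metrizable (f := fun k s => u (Nat.find (hex k s))) hNmeas
  rw [tendsto_pi_nhds]
  intro s
  have hb : ∀ k : ℕ, dist (u (Nat.find (hex k s))) (G s) ≤ 1 / (k + 1) := by
    intro k
    rw [dist_eq_norm, norm_sub_rev]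
    exact (Nat.find_spec (hex k s)).le
  rw [tendsto_iff_dist_tendsto_zero]
  exact squeeze_zero (fun k => dist_nonneg) hb tendsto_one_div_add_atTop_nhds_zero_nat

end Aux

set_option maxHeartbeats 1000000 in
/-- A locally bounded one-parameter semigroup `(P_t)_{t≥0}` of bounded
operators on a Banach space `V` which is weakly continuous at `0⁺` is strongly
continuous at `0⁺`, i.e. is a C₀-semigroup. -/
theorem stmt_2 {V : Type*} [NormedAddCommGroup V] [NormedSpace ℂ V] [CompleteSpace V]
    (P : ℝ → V →L[ℂ] V)
    (hP0 : P 0 = ContinuousLinearMap.id ℂ V)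
    (hPsemi : ∀ s t : ℝ, 0 ≤ s → 0 ≤ t → P (s + t) = (P s).comp (P t))
    (hbdd : ∃ M : ℝ, ∀ t ∈ Set.Icc (0 : ℝ) 1, ‖P t‖ ≤ M)
    (hweak : ∀ (f : V →L[ℂ] ℂ) (x : V),
      Filter.Tendsto (fun t : ℝ => f (P t x)) (nhdsWithin 0 (Set.Ioi 0)) (nhds (f x))) :
    ∀ x : V, Filter.Tendsto (fun t : ℝ => P t x) (nhdsWithin 0 (Set.Ioi 0)) (nhds x) := by
  classical
  obtain ⟨M₀, hM₀⟩ := hbdd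
  set M : ℝ := max M₀ 1 with hMdef
  have hM1 : (1 : ℝ) ≤ M := le_max_right _ _
  have hM : ∀ t ∈ Set.Icc (0 : ℝ) 1, ‖P t‖ ≤ M :=
    fun t ht => (hM₀ t ht).trans (le_max_left _ _)
  have hM2 : ∀ t ∈ Set.Icc (0 : ℝ) 2, ‖P t‖ ≤ M * M := by
    intro t ht
    rcases le_or_gt t 1 with h | h
    · exact (hM t ⟨ht.1, h⟩).trans (le_mul_of_one_le_left (by linarith) hM1)
    · have h1 : t = 1 + (t - 1) := by ring
      rw [h1, hPsemi 1 (t - 1) (by norm_num) (by linarith)]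
      calc ‖(P 1).comp (P (t - 1))‖ ≤ ‖P 1‖ * ‖P (t - 1)‖ :=
            ContinuousLinearMap.opNorm_comp_le _ _
      _ ≤ M * M := mul_le_mul (hM 1 ⟨by norm_num, le_refl 1⟩)
            (hM (t - 1) ⟨by linarith, by linarith [ht.2]⟩) (norm_nonneg _) (by linarith)
  -- the semigroup applied pointwise
  have hsemiPt : ∀ (s t : ℝ), 0 ≤ s → 0 ≤ t → ∀ v : V, P (s + t) v = P s (P t v) := by
    intro s t hs ht v
    rw [hPsemi s t hs ht]; rfl
  intro x
  set G : ℝ → V := fun s => P (max s 0) x with hGdef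
  have hGnonneg : ∀ s : ℝ, 0 ≤ s → G s = P s x := by
    intro s hs; simp only [hGdef, max_eq_left hs]
  -- weak right-continuity of G everywhere
  have hwrc : ∀ (φ : V →L[ℂ] ℂ) (s : ℝ),
      Tendsto (fun t => φ (G t)) (nhdsWithin s (Set.Ioi s)) (nhds (φ (G s))) := by
    intro φ s
    rcases lt_or_ge s 0 with hs | hs
    · have hev : ∀ᶠ t in nhdsWithin s (Set.Ioi s), φ (G t) = φ (G s) := by
        filter_upwards [Ioo_mem_nhdsGT_of_mem (⟨le_refl s, hs⟩ : s ∈ Set.Ico s 0)] with t ht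
        simp only [hGdef, max_eq_right ht.2.le, max_eq_right hs.le]
      exact tendsto_const_nhds.congr' (by filter_upwards [hev] with t ht using ht.symm)
    · have base := hweak φ (P s x)
      have hshift : Tendsto (fun t : ℝ => t - s) (nhdsWithin s (Set.Ioi s))
          (nhdsWithin 0 (Set.Ioi 0)) := by
        apply tendsto_nhdsWithin_of_tendsto_nhds_of_eventually_within
        · have : Tendsto (fun t : ℝ => t - s) (nhds s) (nhds (s - s)) :=
            (continuous_id.sub continuous_const).tendsto s
          rw [sub_self] at this
          exact this.mono_left nhdsWithin_le_nhds
        · filter_upwards [self_mem_nhdsWithin] with t ht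
          exact sub_pos.2 (Set.mem_Ioi.1 ht)
      have hcomp := base.comp hshift
      have hev : ∀ᶠ t in nhdsWithin s (Set.Ioi s),
          φ (P (t - s) (P s x)) = φ (G t) := by
        filter_upwards [self_mem_nhdsWithin] with t (ht : t ∈ Set.Ioi s)
        have hts : (0:ℝ) ≤ t - s := by have : s < t := ht; linarith
        rw [← hsemiPt (t - s) s hts hs, sub_add_cancel, hGnonneg t (hs.trans (le_of_lt ht))]
      have hGs : φ (G s) = φ (P s x) := by rw [hGnonneg s hs]
      rw [hGs]
      exact hcomp.congr' hev
  -- scalar measurability of G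
  have hGmeas : ∀ φ : V →L[ℂ] ℂ, Measurable fun s => φ (G s) := by
    intro φ
    have hlo : ∀ (m : ℕ) (s : ℝ), s < ((⌊((m:ℝ) + 1) * s⌋ : ℝ) + 1) / ((m:ℝ) + 1) := by
      intro m s
      rw [lt_div_iff₀ (by positivity : (0:ℝ) < (m:ℝ) + 1)]
      have := Int.lt_floor_add_one (((m:ℝ) + 1) * s)
      nlinarith
    have hup : ∀ (m : ℕ) (s : ℝ),
        ((⌊((m:ℝ) + 1) * s⌋ : ℝ) + 1) / ((m:ℝ) + 1) ≤ s + 1 / ((m:ℝ) + 1) := by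
      intro m s
      rw [div_le_iff₀ (by positivity : (0:ℝ) < (m:ℝ) + 1)]
      have h1 := Int.floor_le (((m:ℝ) + 1) * s)
      have h2 : (1 / ((m:ℝ) + 1)) * ((m:ℝ) + 1) = 1 := by
        field_simp
      nlinarith
    apply measurable_of_tendsto_metrizable
      (f := fun (m : ℕ) (s : ℝ) => φ (G (((⌊((m:ℝ) + 1) * s⌋ : ℝ) + 1) / ((m:ℝ) + 1))))
    · intro m
      have hmono : Monotone fun s : ℝ => ⌊((m:ℝ) + 1) * s⌋ := fun a b hab =>
        Int.floor_le_floor (mul_le_mul_of_nonneg_left hab (by positivity))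
      exact (measurable_from_top
        (f := fun k : ℤ => φ (G (((k : ℝ) + 1) / ((m:ℝ) + 1))))).comp hmono.measurable
    · rw [tendsto_pi_nhds]
      intro s
      refine (hwrc φ s).comp ?_
      apply tendsto_nhdsWithin_of_tendsto_nhds_of_eventually_within
      · apply tendsto_of_tendsto_of_tendsto_of_le_of_le
          (g := fun _ : ℕ => s) (h := fun m : ℕ => s + 1 / ((m:ℝ) + 1))
        · exact tendsto_const_nhds
        · have h0 := tendsto_one_div_add_atTop_nhds_zero_nat (𝕜 := ℝ)
          have := tendsto_const_nhds (x := s) (f := atTop (α := ℕ)) |>.add h0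
          simpa using this
        · exact fun m => (hlo m s).le
        · exact fun m => hup m s
      · filter_upwards with m
        exact Set.mem_Ioi.2 (hlo m s)
  -- the separable subspace
  set W : Submodule ℂ V :=
    (Submodule.span ℂ (Set.range fun q : ℚ => G (q : ℝ))).topologicalClosure with hWdef
  have hWc : IsClosed (W : Set V) := Submodule.isClosed_topologicalClosure _
  have hWsep : IsSeparable (W : Set V) := by
    have h1 : IsSeparable (Set.range fun q : ℚ => G (q : ℝ)) :=
      (countable_range _).isSeparable
    have h2 := h1.span (R := ℂ)
    rw [hWdef]
    rw [Submodule.topologicalClosure_coe]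
    exact h2.closure
  have hmemW : ∀ s : ℝ, G s ∈ W := by
    intro s
    by_contra hs
    obtain ⟨f, hfW, hfx⟩ := aux_sep W hWc hs
    have hq : ∀ n : ℕ, ∃ q : ℚ, s < (q : ℝ) ∧ (q : ℝ) < s + 1 / ((n : ℝ) + 1) :=
      fun n => exists_rat_btwn (lt_add_of_pos_right s (by positivity))
    choose qs hq1 hq2 using hq
    have htd : Tendsto (fun n : ℕ => ((qs n : ℚ) : ℝ)) atTop (nhdsWithin s (Set.Ioi s)) := by
      apply tendsto_nhdsWithin_of_tendsto_nhds_of_eventually_within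
      · apply tendsto_of_tendsto_of_tendsto_of_le_of_le
          (g := fun _ : ℕ => s) (h := fun n : ℕ => s + 1 / ((n:ℝ) + 1))
        · exact tendsto_const_nhds
        · have h0 := tendsto_one_div_add_atTop_nhds_zero_nat (𝕜 := ℝ)
          have := tendsto_const_nhds (x := s) (f := atTop (α := ℕ)) |>.add h0
          simpa using this
        · exact fun n => (hq1 n).le
        · exact fun n => (hq2 n).le
      · filter_upwards with n
        exact Set.mem_Ioi.2 (hq1 n)
    have hlim := (hwrc f s).comp htd
    have hzero : ∀ n : ℕ, f (G ((qs n : ℚ) : ℝ)) = 0 := by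
      intro n
      apply hfW
      exact Submodule.le_topologicalClosure _ (Submodule.subset_span (mem_range_self _))
    have hlim0 : Tendsto (fun _ : ℕ => (0:ℂ)) atTop (nhds (f (G s))) :=
      hlim.congr hzero
    exact hfx (tendsto_nhds_unique hlim0 tendsto_const_nhds)
  have hGsm : StronglyMeasurable G := aux_meas W hWsep G hmemW hGmeas
  have hGbound : ∀ s ∈ Set.Icc (0:ℝ) 2, ‖G s‖ ≤ M * M * ‖x‖ := by
    intro s hs
    rw [hGnonneg s hs.1]
    calc ‖P s x‖ ≤ ‖P s‖ * ‖x‖ := (P s).le_opNorm x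
    _ ≤ M * M * ‖x‖ := mul_le_mul_of_nonneg_right (hM2 s hs) (norm_nonneg x)
  have hInt : ∀ a b : ℝ, 0 ≤ a → 0 ≤ b → a ≤ 2 → b ≤ 2 →
      IntervalIntegrable G volume a b := by
    intro a b ha hb ha2 hb2
    rw [intervalIntegrable_iff]
    apply Integrable.mono' (g := fun _ => M * M * ‖x‖)
      (integrableOn_const measure_Ioc_lt_top.ne)
    · exact hGsm.aestronglyMeasurable.restrict
    · refine (ae_restrict_iff' measurableSet_uIoc).2 (ae_of_all _ ?_)
      intro s hs
      rcases hs with ⟨hs1, hs2⟩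
      refine hGbound s ⟨?_, ?_⟩
      · exact le_of_lt (lt_of_le_of_lt (le_min ha hb) hs1)
      · exact hs2.trans (max_le ha2 hb2)
  set y : ℝ → V := fun r => (1 / r : ℝ) • ∫ s in (0:ℝ)..r, G s with hydef
  -- each y r (0 < r ≤ 1) is strongly continuous
  have hyD : ∀ r : ℝ, 0 < r → r ≤ 1 →
      Tendsto (fun t => P t (y r)) (nhdsWithin 0 (Set.Ioi 0)) (nhds (y r)) := by
    intro r hr hr1
    have key : ∀ t ∈ Set.Ioc (0:ℝ) r,
        ‖P t (y r) - y r‖ ≤ (2 * (M * M * ‖x‖) / r) * t := by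
      intro t ht
      have ht0 : 0 < t := ht.1
      have htr : t ≤ r := ht.2
      have h1 : P t (y r) = (1 / r : ℝ) • ∫ s in (0:ℝ)..r, P t (G s) := by
        rw [hydef]
        rw [ContinuousLinearMap.map_smul_of_tower]
        congr 1
        exact ((P t).intervalIntegral_comp_comm
          (hInt 0 r le_rfl hr.le (by norm_num) (by linarith))).symm
      have h2 : ∀ s ∈ Set.uIcc (0:ℝ) r, P t (G s) = G (t + s) := by
        intro s hs
        rw [Set.uIcc_of_le hr.le] at hs
        rw [hGnonneg s hs.1, hGnonneg (t + s) (by linarith [hs.1, ht0.le])]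
        exact (hsemiPt t s ht0.le hs.1 x).symm
      have h3 : (∫ s in (0:ℝ)..r, P t (G s)) = ∫ s in (0:ℝ)..r, G (t + s) :=
        intervalIntegral.integral_congr h2
      have h4 : (∫ s in (0:ℝ)..r, G (t + s)) = ∫ s in t..(t + r), G s := by
        have := intervalIntegral.integral_comp_add_left (a := (0:ℝ)) (b := r) G t
        simpa using this
      have i1 : IntervalIntegrable G volume 0 t :=
        hInt 0 t le_rfl ht0.le (by norm_num) (by linarith)
      have i2 : IntervalIntegrable G volume t r :=
        hInt t r ht0.le hr.le (by linarith) (by linarith)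
      have i3 : IntervalIntegrable G volume r (t + r) :=
        hInt r (t + r) hr.le (by linarith) (by linarith) (by linarith)
      have e1 := intervalIntegral.integral_add_adjacent_intervals i2 i3
      have e2 := intervalIntegral.integral_add_adjacent_intervals i1 i2
      have h5 : P t (y r) - y r =
          (1 / r : ℝ) • ((∫ s in r..(t + r), G s) - ∫ s in (0:ℝ)..t, G s) := by
        rw [h1, h3, h4, hydef]
        rw [← smul_sub]
        congr 1
        rw [← e1, ← e2]
        abel
      have hb1 : ‖∫ s in r..(t + r), G s‖ ≤ (M * M * ‖x‖) * t := by
        have := intervalIntegral.norm_integral_le_of_norm_le_const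
          (C := M * M * ‖x‖) (a := r) (b := t + r) (f := G) ?_
        · calc ‖∫ s in r..(t + r), G s‖ ≤ (M * M * ‖x‖) * |t + r - r| := this
          _ = (M * M * ‖x‖) * t := by rw [add_sub_cancel_right, abs_of_pos ht0]
        · intro s hs
          rw [Set.uIoc_of_le (by linarith)] at hs
          exact hGbound s ⟨by linarith [hs.1], by linarith [hs.2]⟩
      have hb2 : ‖∫ s in (0:ℝ)..t, G s‖ ≤ (M * M * ‖x‖) * t := by
        have := intervalIntegral.norm_integral_le_of_norm_le_const
          (C := M * M * ‖x‖) (a := (0:ℝ)) (b := t) (f := G) ?_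
        · calc ‖∫ s in (0:ℝ)..t, G s‖ ≤ (M * M * ‖x‖) * |t - 0| := this
          _ = (M * M * ‖x‖) * t := by rw [sub_zero, abs_of_pos ht0]
        · intro s hs
          rw [Set.uIoc_of_le ht0.le] at hs
          exact hGbound s ⟨hs.1.le, by linarith [hs.2]⟩
      rw [h5, norm_smul]
      have : ‖(1 / r : ℝ)‖ = 1 / r := by
        rw [Real.norm_eq_abs, abs_of_pos (by positivity)]
      rw [this]
      calc 1 / r * ‖(∫ s in r..(t + r), G s) - ∫ s in (0:ℝ)..t, G s‖
          ≤ 1 / r * (‖∫ s in r..(t + r), G s‖ + ‖∫ s in (0:ℝ)..t, G s‖) := by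
            apply mul_le_mul_of_nonneg_left (norm_sub_le _ _) (by positivity)
        _ ≤ 1 / r * ((M * M * ‖x‖) * t + (M * M * ‖x‖) * t) := by
            apply mul_le_mul_of_nonneg_left (add_le_add hb1 hb2) (by positivity)
        _ = (2 * (M * M * ‖x‖) / r) * t := by ring
    have hto : Tendsto (fun t : ℝ => P t (y r) - y r) (nhdsWithin 0 (Set.Ioi 0)) (nhds 0) := by
      rw [tendsto_zero_iff_norm_tendsto_zero]
      apply squeeze_zero' (Eventually.of_forall fun t => norm_nonneg _)
      · filter_upwards [Ioc_mem_nhdsGT_of_mem (⟨le_refl (0:ℝ), hr⟩ : (0:ℝ) ∈ Set.Ico 0 r)]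
          with t ht
        exact key t ht
      · have h1 : Tendsto (fun t : ℝ => (2 * (M * M * ‖x‖) / r) * t)
            (nhds 0) (nhds ((2 * (M * M * ‖x‖) / r) * 0)) :=
          (continuous_const.mul continuous_id).tendsto (0:ℝ)
        rw [mul_zero] at h1
        exact h1.mono_left nhdsWithin_le_nhds
    have := hto.add (tendsto_const_nhds (x := y r))
    simpa using this
  -- weak convergence of y r to x
  have hyW : ∀ φ : V →L[ℂ] ℂ,
      Tendsto (fun r => φ (y r)) (nhdsWithin 0 (Set.Ioi 0)) (nhds (φ x)) := by
    intro φ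
    rw [Metric.tendsto_nhdsWithin_nhds]
    intro ε hε
    have hw := hweak φ x
    rw [Metric.tendsto_nhdsWithin_nhds] at hw
    obtain ⟨δ, hδ, hδ'⟩ := hw (ε / 2) (by positivity)
    refine ⟨min δ 1, lt_min hδ one_pos, ?_⟩
    intro r hr hrd
    have hr0 : (0:ℝ) < r := hr
    rw [Real.dist_eq, sub_zero, abs_of_pos hr0] at hrd
    have hrδ : r < δ := lt_of_lt_of_le hrd (min_le_left _ _)
    have hr1 : r ≤ 1 := le_of_lt (lt_of_lt_of_le hrd (min_le_right _ _))
    have hIr : IntervalIntegrable G volume 0 r :=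
      hInt 0 r le_rfl hr0.le (by norm_num) (by linarith)
    have hIφ : IntervalIntegrable (fun s => φ (G s)) volume 0 r := by
      rw [intervalIntegrable_iff] at hIr ⊢
      exact φ.integrable_comp hIr
    have hcomm : φ (y r) = (1 / r : ℝ) • ∫ s in (0:ℝ)..r, φ (G s) := by
      rw [hydef]
      rw [ContinuousLinearMap.map_smul_of_tower]
      congr 1
      exact (φ.intervalIntegral_comp_comm hIr).symm
    have hφx : φ x = (1 / r : ℝ) • ∫ _ in (0:ℝ)..r, φ x := by
      rw [intervalIntegral.integral_const, sub_zero, smul_smul, one_div,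
        inv_mul_cancel₀ (ne_of_gt hr0), one_smul]
    rw [dist_eq_norm, hcomm]
    rw [hφx]
    rw [← smul_sub, ← intervalIntegral.integral_sub hIφ intervalIntegrable_const]
    have hbnd : ‖∫ s in (0:ℝ)..r, (φ (G s) - φ x)‖ ≤ (ε / 2) * |r - 0| := by
      apply intervalIntegral.norm_integral_le_of_norm_le_const
      intro s hs
      rw [Set.uIoc_of_le hr0.le] at hs
      have hs0 : (0:ℝ) < s := hs.1
      have hsδ : s < δ := lt_of_le_of_lt hs.2 hrδ
      have := hδ' (Set.mem_Ioi.2 hs0) (by rwa [Real.dist_eq, sub_zero, abs_of_pos hs0])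
      rw [hGnonneg s hs0.le]
      rw [dist_eq_norm] at this
      exact this.le
    rw [norm_smul]
    have hn : ‖(1 / r : ℝ)‖ = 1 / r := by
      rw [Real.norm_eq_abs, abs_of_pos (by positivity)]
    rw [hn]
    calc 1 / r * ‖∫ s in (0:ℝ)..r, (φ (G s) - φ x)‖ ≤ 1 / r * ((ε / 2) * |r - 0|) :=
          mul_le_mul_of_nonneg_left hbnd (by positivity)
    _ = ε / 2 := by
          rw [sub_zero, abs_of_pos hr0]; field_simp
    _ < ε := by linarith
  -- the subspace of strongly continuous vectors
  set D : Submodule ℂ V :=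
    { carrier := {v | Tendsto (fun t => P t v) (nhdsWithin 0 (Set.Ioi 0)) (nhds v)}
      add_mem' := fun ha hb => (ha.add hb).congr fun t => ((P t).map_add _ _).symm
      zero_mem' := tendsto_const_nhds.congr fun t => ((P t).map_zero).symm
      smul_mem' := fun c v hv => (hv.const_smul c).congr fun t => ((P t).map_smul c v).symm }
    with hDdef
  have hxD : x ∈ D.topologicalClosure := by
    by_contra hx
    obtain ⟨f, hfD, hfx⟩ :=
      aux_sep D.topologicalClosure (Submodule.isClosed_topologicalClosure _) hx
    have hy0 : ∀ᶠ r in nhdsWithin (0:ℝ) (Set.Ioi 0), f (y r) = 0 := by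
      filter_upwards [Ioc_mem_nhdsGT_of_mem (⟨le_refl (0:ℝ), one_pos⟩ : (0:ℝ) ∈ Set.Ico 0 1)]
        with r hr
      exact hfD _ (Submodule.le_topologicalClosure D (hyD r hr.1 hr.2))
    have h0 : Tendsto (fun _ : ℝ => (0:ℂ)) (nhdsWithin 0 (Set.Ioi 0)) (nhds (f x)) :=
      (hyW f).congr' hy0
    exact hfx (tendsto_nhds_unique h0 tendsto_const_nhds)
  -- elements of the closure of D are strongly continuous
  have hv' : x ∈ closure (D : Set V) := by
    rw [← Submodule.topologicalClosure_coe]; exact hxD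
  rw [Metric.tendsto_nhdsWithin_nhds]
  intro ε hε
  have hM2pos : (0:ℝ) < M + 2 := by linarith
  obtain ⟨z, hz, hdz⟩ := Metric.mem_closure_iff.1 hv' (ε / (M + 2)) (by positivity)
  have hzD : Tendsto (fun t => P t z) (nhdsWithin 0 (Set.Ioi 0)) (nhds z) := hz
  rw [Metric.tendsto_nhdsWithin_nhds] at hzD
  obtain ⟨δ, hδ, hδ'⟩ := hzD (ε / (M + 2)) (by positivity)
  refine ⟨min δ 1, lt_min hδ one_pos, ?_⟩
  intro t ht htd
  have ht0 : (0:ℝ) < t := ht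
  rw [Real.dist_eq, sub_zero, abs_of_pos ht0] at htd
  have htδ : t < δ := lt_of_lt_of_le htd (min_le_left _ _)
  have ht1 : t ≤ 1 := le_of_lt (lt_of_lt_of_le htd (min_le_right _ _))
  have e1 : dist (P t x) x ≤ dist (P t x) (P t z) + dist (P t z) z + dist z x :=
    dist_triangle4 (P t x) (P t z) z x
  have e2 : dist (P t x) (P t z) ≤ M * dist x z := by
    rw [dist_eq_norm, ← map_sub]
    calc ‖P t (x - z)‖ ≤ ‖P t‖ * ‖x - z‖ := (P t).le_opNorm _
    _ ≤ M * ‖x - z‖ :=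
        mul_le_mul_of_nonneg_right (hM t ⟨ht0.le, ht1⟩) (norm_nonneg _)
    _ = M * dist x z := by rw [dist_eq_norm]
  have e3 : dist (P t z) z < ε / (M + 2) :=
    hδ' (Set.mem_Ioi.2 ht0) (by rwa [Real.dist_eq, sub_zero, abs_of_pos ht0])
  have e4 : dist x z < ε / (M + 2) := hdz
  have e5 : dist z x < ε / (M + 2) := by rwa [dist_comm]
  have hMd : M * dist x z ≤ M * (ε / (M + 2)) := by nlinarith [dist_nonneg (x := x) (y := z)]
  have : M * (ε / (M + 2)) + ε / (M + 2) + ε / (M + 2) = ε := by field_simp; ring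
  nlinarith [e1, e2, e3, e5, hMd]
end

section
/- Let A be a unital C*-algebra, (π, h) a unital *-representation of A on a Hilbert space h, and χ : A → ℂ a character. Let δ : A → h be a bounded linear map satisfying δ(ab) = χ(b)·δ(a) + π(a)(δ(b)) for all a, b ∈ A (a (π,χ)-derivation into the column space |h⟩). Then there exists a vector ξ ∈ h such that δ(a) = π(a)ξ − χ(a)ξ for all a ∈ A. -/
open Filter Topology
open scoped InnerProductSpace

section aux
variable {A : Type*} [CStarAlgebra A] [PartialOrder A] [StarOrderedRing A]

private lemma aux_cfc (s : A) (hs : 0 ≤ s) (ε : ℝ) (hε : 0 < ε) :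
    ∃ e : A, (∃ w : A, e = s * w) ∧ ‖e‖ ≤ 1 ∧
      ∀ b : A, star b * b ≤ s → ‖b * (1 - e)‖ ^ 2 ≤ ε / 4 := by
  have hsa : IsSelfAdjoint s := .of_nonneg hs
  have hspec : ∀ t ∈ spectrum ℝ s, 0 ≤ t := spectrum_nonneg_of_nonneg hs
  have hne : ∀ t ∈ spectrum ℝ s, t + ε ≠ 0 := fun t ht => by
    have := hspec t ht; positivity
  have hcont_inv : ContinuousOn (fun t : ℝ => (t + ε)⁻¹) (spectrum ℝ s) :=
    ContinuousOn.inv₀ (by fun_prop) hne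
  have hcont_f : ContinuousOn (fun t : ℝ => t * (t + ε)⁻¹) (spectrum ℝ s) :=
    continuousOn_id.mul hcont_inv
  set g : ℝ → ℝ := fun t => 1 - t * (t + ε)⁻¹ with hg
  have hcont_g : ContinuousOn g (spectrum ℝ s) := continuousOn_const.sub hcont_f
  set e : A := cfc (fun t : ℝ => t * (t + ε)⁻¹) s with he
  have h1e : 1 - e = cfc g s := by
    rw [he, hg, ← cfc_const_one ℝ s, ← cfc_sub _ _ s (by fun_prop) hcont_f]
  have hgsa : IsSelfAdjoint (cfc g s) := cfc_predicate g s
  refine ⟨e, ⟨cfc (fun t : ℝ => (t + ε)⁻¹) s, ?_⟩, ?_, ?_⟩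
  · calc e = cfc (fun t : ℝ => t * (t + ε)⁻¹) s := rfl
      _ = cfc (fun t : ℝ => t) s * cfc (fun t : ℝ => (t + ε)⁻¹) s :=
          cfc_mul _ _ s (by fun_prop) hcont_inv
      _ = s * cfc (fun t : ℝ => (t + ε)⁻¹) s := by rw [cfc_id' ℝ s]
  · refine norm_cfc_le zero_le_one fun t ht => ?_
    have h0 := hspec t ht
    rw [Real.norm_eq_abs, abs_of_nonneg (by positivity), ← div_eq_mul_inv,
      div_le_one (by positivity)]
    linarith
  · intro b hb
    have hnsq : ‖b * (1 - e)‖ ^ 2 = ‖star (b * (1 - e)) * (b * (1 - e))‖ := by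
      rw [CStarRing.norm_star_mul_self, sq]
    have hexp : star (b * (1 - e)) * (b * (1 - e))
        = star (cfc g s) * (star b * b) * cfc g s := by
      rw [h1e, star_mul, hgsa.star_eq]
      noncomm_ring
    have hle : star (cfc g s) * (star b * b) * cfc g s
        ≤ star (cfc g s) * s * cfc g s := star_left_conjugate_le_conjugate hb _
    have hnonneg : 0 ≤ star (cfc g s) * (star b * b) * cfc g s :=
      star_left_conjugate_nonneg (star_mul_self_nonneg b) _
    have hcsc : star (cfc g s) * s * cfc g s = cfc (fun t : ℝ => g t * t * g t) s := by
      rw [hgsa.star_eq]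
      rw [cfc_mul (fun t : ℝ => g t * t) g s (hcont_g.mul continuousOn_id) hcont_g,
        cfc_mul g (fun t : ℝ => t) s hcont_g continuousOn_id, cfc_id' ℝ s]
    have hbound : ‖cfc (fun t : ℝ => g t * t * g t) s‖ ≤ ε / 4 := by
      refine norm_cfc_le (by positivity) fun t ht => ?_
      have h0 := hspec t ht
      have hpos : (0:ℝ) < t + ε := by positivity
      have hgt : g t = ε * (t + ε)⁻¹ := by
        simp only [hg]
        rw [eq_mul_inv_iff_mul_eq₀ hpos.ne', sub_mul, inv_mul_cancel_right₀ hpos.ne']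
        ring
      rw [Real.norm_eq_abs, hgt]
      rw [abs_of_nonneg (by positivity)]
      have key : ε * (t + ε)⁻¹ * t * (ε * (t + ε)⁻¹) = ε ^ 2 * t / (t + ε) ^ 2 := by
        field_simp
      rw [key, div_le_div_iff₀ (by positivity) (by norm_num)]
      nlinarith [sq_nonneg (t - ε), sq_nonneg (t + ε)]
    calc ‖b * (1 - e)‖ ^ 2 = ‖star (cfc g s) * (star b * b) * cfc g s‖ := by
          rw [hnsq, hexp]
      _ ≤ ‖star (cfc g s) * s * cfc g s‖ :=
          CStarAlgebra.norm_le_norm_of_nonneg_of_le hnonneg hle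
      _ ≤ ε / 4 := by rw [hcsc]; exact hbound

private lemma aux_approx (χ : A →ₗ[ℂ] ℂ) (hχmul : ∀ a b, χ (a * b) = χ a * χ b) :
    ∃ E : Finset A × ℕ → A, (∀ i, χ (E i) = 0) ∧ (∀ i, ‖E i‖ ≤ 1) ∧
      ∀ b : A, χ b = 0 → Tendsto (fun i => b * E i) atTop (𝓝 b) := by
  classical
  set s : Finset A × ℕ → A := fun i => ∑ a ∈ i.1.filter (fun a => χ a = 0), star a * a
    with hs
  have hs_nonneg : ∀ i, 0 ≤ s i := fun i =>
    Finset.sum_nonneg fun a _ => star_mul_self_nonneg a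
  have hχs : ∀ i, χ (s i) = 0 := by
    intro i
    rw [hs, map_sum]
    refine Finset.sum_eq_zero fun a ha => ?_
    rw [hχmul]
    rw [Finset.mem_filter] at ha
    rw [ha.2, mul_zero]
  choose E hEw hE1 hEb using fun i =>
    aux_cfc (s i) (hs_nonneg i) (1 / (i.2 + 1)) (by positivity)
  refine ⟨E, fun i => ?_, hE1, fun b hb => ?_⟩
  · obtain ⟨w, hw⟩ := hEw i
    rw [hw, hχmul, hχs, zero_mul]
  · rw [tendsto_iff_norm_sub_tendsto_zero]
    refine squeeze_zero' (.of_forall fun i => norm_nonneg _)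
      ?_ (g := fun i => Real.sqrt ((1 / (i.2 + 1)) / 4)) ?_
    · filter_upwards [eventually_ge_atTop (({b} : Finset A), 0)] with i hi
      have hbmem : b ∈ i.1.filter (fun a => χ a = 0) := by
        rw [Finset.mem_filter]
        exact ⟨hi.1 (Finset.mem_singleton_self b), hb⟩
      have hble : star b * b ≤ s i :=
        Finset.single_le_sum (f := fun a => star a * a)
          (fun a _ => star_mul_self_nonneg a) hbmem
      have := hEb i b hble
      have heq : b * E i - b = -(b * (1 - E i)) := by noncomm_ring
      rw [heq, norm_neg]
      exact (Real.le_sqrt (norm_nonneg _) (by positivity)).mpr this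
    · have h2 : Tendsto (fun i : Finset A × ℕ => (i.2 : ℕ)) atTop atTop := by
        rw [← prod_atTop_atTop_eq]
        exact tendsto_snd
      have h3 : Tendsto (fun n : ℕ => ((1:ℝ) / (n + 1)) / 4) atTop (𝓝 0) := by
        simpa using (tendsto_one_div_add_atTop_nhds_zero_nat (𝕜 := ℝ)).div_const 4
      have h4 := (Real.continuous_sqrt.tendsto' 0 0 (by simp)).comp (h3.comp h2)
      exact h4

end aux


/-- Let `A` be a unital C*-algebra, `π : A → B(h)` a unital
*-representation on a Hilbert space `h`, `χ` a character of `A`, and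
`δ : A → h` a bounded linear map with `δ(ab) = χ(b)•δ(a) + π(a)(δ(b))`
(a `(π,χ)`-derivation into the column space `|h⟩`). Then `δ` is inner:
there is `ξ ∈ h` with `δ(a) = π(a)ξ − χ(a)ξ` for all `a`. -/
theorem stmt_4 {A : Type*} [NormedRing A] [StarRing A] [CStarRing A]
    [NormedAlgebra ℂ A] [CompleteSpace A] [StarModule ℂ A]
    {h : Type*} [NormedAddCommGroup h] [InnerProductSpace ℂ h] [CompleteSpace h]
    (π : A →⋆ₐ[ℂ] (h →L[ℂ] h))
    (χ : A →ₗ[ℂ] ℂ) (hχmul : ∀ a b, χ (a * b) = χ a * χ b) (hχne : χ ≠ 0)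
    (δ : A →L[ℂ] h)
    (hδ : ∀ a b, δ (a * b) = χ b • δ a + π a (δ b)) :
    ∃ ξ : h, ∀ a, δ a = π a ξ - χ a • ξ := by
  classical
  letI : CStarAlgebra A :=
    { toNormedRing := inferInstance, toStarRing := inferInstance,
      toCompleteSpace := inferInstance, toCStarRing := inferInstance,
      toNormedAlgebra := inferInstance, toStarModule := inferInstance }
  letI : PartialOrder A := CStarAlgebra.spectralOrder A
  haveI : StarOrderedRing A := CStarAlgebra.spectralOrderedRing A
  -- basic facts about χ
  obtain ⟨a₀, ha₀⟩ : ∃ a₀, χ a₀ ≠ 0 := by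
    by_contra hc
    push_neg at hc
    exact hχne (by ext a; simpa using hc a)
  have hχ1 : χ 1 = 1 := by
    have h1 := hχmul a₀ 1
    rw [mul_one] at h1
    exact mul_left_cancel₀ ha₀ (by rw [← h1, mul_one])
  -- δ 1 = 0
  have hδ1 : δ (1 : A) = 0 := by
    have h2 : δ (1 : A) = δ 1 + δ 1 := by
      simpa [hχ1, map_one π] using hδ 1 1
    exact left_eq_add.mp h2
  -- the approximate unit
  obtain ⟨E, hχE, hE1, hEtends⟩ := aux_approx χ hχmul
  let U : Ultrafilter (Finset A × ℕ) := Ultrafilter.of atTop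
  have hU : (U : Filter (Finset A × ℕ)) ≤ atTop := Ultrafilter.of_le _
  -- limits along U
  have hbdd : ∀ i, ‖δ (E i)‖ ≤ ‖δ‖ := fun i => by
    calc ‖δ (E i)‖ ≤ ‖δ‖ * ‖E i‖ := δ.le_opNorm _
      _ ≤ ‖δ‖ * 1 := mul_le_mul_of_nonneg_left (hE1 i) δ.opNorm_nonneg
      _ = ‖δ‖ := mul_one _
  have hlim : ∀ w : h, ∃ z : ℂ, Tendsto (fun i => ⟪δ (E i), w⟫_ℂ) U (𝓝 z) := by
    intro w
    have hmem : (U : Filter (Finset A × ℕ)) ≤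
        Filter.comap (fun i => ⟪δ (E i), w⟫_ℂ) (𝓟 (Metric.closedBall 0 (‖δ‖ * ‖w‖))) := by
      rw [comap_principal]
      refine le_principal_iff.mpr (Eventually.of_forall fun i => ?_)
      simp only [Set.mem_preimage, Metric.mem_closedBall, dist_zero_right]
      calc ‖⟪δ (E i), w⟫_ℂ‖ ≤ ‖δ (E i)‖ * ‖w‖ := norm_inner_le_norm _ _
        _ ≤ ‖δ‖ * ‖w‖ := mul_le_mul_of_nonneg_right (hbdd i) (norm_nonneg w)
    obtain ⟨z, -, hz⟩ := (isCompact_closedBall (0:ℂ) (‖δ‖ * ‖w‖)).ultrafilter_le_nhds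
      (U.map (fun i => ⟪δ (E i), w⟫_ℂ)) (by rwa [Ultrafilter.coe_map, map_le_iff_le_comap])
    exact ⟨z, by rwa [Ultrafilter.coe_map] at hz⟩
  choose z hz using hlim
  -- z is linear and bounded
  let L : h →ₗ[ℂ] ℂ :=
    { toFun := z
      map_add' := fun w₁ w₂ => by
        refine tendsto_nhds_unique (hz _) ?_
        simpa only [inner_add_right] using (hz w₁).add (hz w₂)
      map_smul' := fun c w => by
        refine tendsto_nhds_unique (hz _) ?_
        simpa only [inner_smul_right, RingHom.id_apply, smul_eq_mul] using (hz w).const_mul c }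
  have hLbdd : ∀ w, ‖L w‖ ≤ ‖δ‖ * ‖w‖ := by
    intro w
    refine le_of_tendsto (hz w).norm (Eventually.of_forall fun i => ?_)
    calc ‖⟪δ (E i), w⟫_ℂ‖ ≤ ‖δ (E i)‖ * ‖w‖ := norm_inner_le_norm _ _
      _ ≤ ‖δ‖ * ‖w‖ := mul_le_mul_of_nonneg_right (hbdd i) (norm_nonneg w)
  let L' : h →L[ℂ] ℂ := L.mkContinuous ‖δ‖ hLbdd
  let ξ : h := (InnerProductSpace.toDual ℂ h).symm L'
  have hξ : ∀ w, ⟪ξ, w⟫_ℂ = z w := fun w => by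
    simp only [ξ, InnerProductSpace.toDual_symm_apply]
    rfl
  -- the key identity on the kernel of χ
  have key : ∀ b, χ b = 0 → δ b = π b ξ := by
    intro b hb
    refine ext_inner_right ℂ fun w => ?_
    have hadj : ContinuousLinearMap.adjoint (π (star b)) = π b := by
      rw [← ContinuousLinearMap.star_eq_adjoint, ← map_star, star_star]
    have h1 : ⟪π b ξ, w⟫_ℂ = ⟪ξ, π (star b) w⟫_ℂ := by
      rw [← hadj, ContinuousLinearMap.adjoint_inner_left]
    have h2 : Tendsto (fun i => ⟪δ (b * E i), w⟫_ℂ) U (𝓝 (⟪δ b, w⟫_ℂ)) := by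
      have h2' : Tendsto (fun i => δ (b * E i)) (U : Filter (Finset A × ℕ)) (𝓝 (δ b)) :=
        (δ.continuous.tendsto _).comp ((hEtends b hb).mono_left hU)
      exact h2'.inner tendsto_const_nhds
    have h3 : Tendsto (fun i => ⟪δ (b * E i), w⟫_ℂ) U (𝓝 (z (π (star b) w))) := by
      have heq : ∀ i, ⟪δ (b * E i), w⟫_ℂ = ⟪δ (E i), π (star b) w⟫_ℂ := by
        intro i
        have : δ (b * E i) = π b (δ (E i)) := by
          rw [hδ b (E i), hχE i]
          simp
        rw [this, ← hadj, ContinuousLinearMap.adjoint_inner_left]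
      exact (hz (π (star b) w)).congr (fun i => (heq i).symm)
    rw [h1, hξ]
    exact tendsto_nhds_unique h2 h3
  -- conclusion
  refine ⟨ξ, fun a => ?_⟩
  have hb : χ (a - χ a • 1) = 0 := by
    simp [hχ1]
  have hsplit : a = (a - χ a • 1) + χ a • 1 := by abel
  calc δ a = δ ((a - χ a • 1) + χ a • 1) := by rw [← hsplit]
    _ = δ (a - χ a • 1) + χ a • δ 1 := by rw [map_add, map_smul]
    _ = δ (a - χ a • 1) := by rw [hδ1, smul_zero, add_zero]
    _ = π (a - χ a • 1) ξ := key _ hb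
    _ = π a ξ - χ a • ξ := by
        rw [map_sub, map_smul, map_one]
        simp [ContinuousLinearMap.sub_apply]
end

section
/- In the setting of the GNS-type construction: let A be a unital *-algebra, ε : A → ℂ a character, γ : A → ℂ real, conditionally positive, with γ(1) = 0; let k be the Hilbert space completion of (ker ε)/N with inner product ⟨[a],[b]⟩ = γ(a*b), and suppose multiplication induces bounded operators π(a)[z] = [az] (z ∈ ker ε) giving a unital representation π of A on k. Define δ(a) := [a − ε(a)1] ∈ k. Then δ is a (π, ε)-derivation, i.e. δ(ab) = ε(b)δ(a) + π(a)δ(b), and it satisfies ⟨δ(a), δ(b)⟩ = γ(a*b) − conjugate(γ(a))ε(b) − conjugate(ε(a))γ(b) for all a, b ∈ A. -/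
open scoped ComplexInnerProductSpace in
/-- In the GNS-type construction for a unital *-algebra `A` with
character `ε` and a real, conditionally positive `γ` with `γ(1) = 0`: let `k` be the
Hilbert space obtained from `(ker ε)/N` with `⟨[a],[b]⟩ = γ(a*b)` (here `q` denotes
the class map, so `⟪q a, q b⟫ = γ(a*b)` for `a, b ∈ ker ε`), and let `π` be the
unital representation of `A` on `k` with `π(x)(q z) = q(xz)` for `z ∈ ker ε`.
Define `δ(a) := q(a − ε(a)1)`. Then `δ` is a `(π,ε)`-derivation,
`δ(ab) = ε(b)δ(a) + π(a)δ(b)`, and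
`⟨δ(a), δ(b)⟩ = γ(a*b) − conj(γ(a))ε(b) − conj(ε(a))γ(b)`. -/
theorem stmt_8 {A : Type*} [Ring A] [StarRing A] [Algebra ℂ A] [StarModule ℂ A]
    (ε : A →ₗ[ℂ] ℂ) (hεmul : ∀ a b, ε (a * b) = ε a * ε b) (hε1 : ε 1 = 1)
    (hεstar : ∀ a, ε (star a) = starRingEnd ℂ (ε a))
    (γ : A →ₗ[ℂ] ℂ)
    (hγstar : ∀ a, γ (star a) = starRingEnd ℂ (γ a))
    (hγ1 : γ 1 = 0)
    (hpos : ∀ a, ε a = 0 → ∃ r : ℝ, 0 ≤ r ∧ γ (star a * a) = r)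
    {k : Type*} [NormedAddCommGroup k] [InnerProductSpace ℂ k] [CompleteSpace k]
    (q : A →ₗ[ℂ] k)
    (hq_inner : ∀ a b, ε a = 0 → ε b = 0 → ⟪q a, q b⟫ = γ (star a * b))
    (π : A → (k →L[ℂ] k)) (hπ1 : π 1 = 1)
    (hπ : ∀ x z, ε z = 0 → π x (q z) = q (x * z)) :
    -- δ(a) := q (a - ε(a)·1) is a (π, ε)-derivation:
    (∀ a b, q (a * b - ε (a * b) • (1 : A)) =
        ε b • q (a - ε a • (1 : A)) + π a (q (b - ε b • (1 : A)))) ∧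
    -- and it satisfies the inner product identity:
    (∀ a b, ⟪q (a - ε a • (1 : A)), q (b - ε b • (1 : A))⟫ =
        γ (star a * b) - starRingEnd ℂ (γ a) * ε b - starRingEnd ℂ (ε a) * γ b) := by
  have hker : ∀ a, ε (a - ε a • (1 : A)) = 0 := by
    intro a
    simp [map_sub, map_smul, hε1, smul_eq_mul]
  constructor
  · intro a b
    rw [hπ a _ (hker b)]
    rw [← map_smul, ← map_add]
    congr 1
    rw [hεmul, mul_sub, smul_sub, smul_smul, Algebra.mul_smul_comm, mul_one,
      mul_comm (ε a)]
    abel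
  · intro a b
    rw [hq_inner _ _ (hker a) (hker b)]
    have : star (a - ε a • (1 : A)) * (b - ε b • (1 : A)) =
        star a * b - (starRingEnd ℂ (ε a)) • b - (ε b) • star a
          + ((starRingEnd ℂ (ε a)) * ε b) • (1 : A) := by
      simp only [star_sub, star_smul, star_one, sub_mul, mul_sub,
        Algebra.smul_mul_assoc, Algebra.mul_smul_comm, one_mul, mul_one,
        smul_smul, smul_sub, starRingEnd_apply]
      rw [mul_comm (ε b)]
      abel
    rw [this]
    simp only [map_sub, map_add, map_smul, hγ1, smul_eq_mul, mul_zero, add_zero,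
      hγstar]
    ring
end

section
/- Let Γ be a group, k a Hilbert space, and set k̂ = ℂ ⊕ k with Δ^{QS} the orthogonal projection of k̂ onto {0} ⊕ k. Let ψ : Γ → B(k̂) be a map satisfying ψ_{gh} = ψ_g + ψ_h + ψ_g Δ^{QS} ψ_h, (ψ_g)* = ψ_{g⁻¹}, and ψ_e = 0. Then there exist a unitary representation U of Γ on k, a map ξ : Γ → k, and a map λ : Γ → ℝ such that for every g ∈ Γ, ψ_g has block matrix form [[ iλ_g − ½‖ξ_g‖², −⟨ξ_g| U_g ], [ |ξ_g⟩, U_g − I_k ]], and these satisfy the cocycle relations ξ_{gh} = ξ_g + U_g ξ_h and λ_{gh} = λ_g + λ_h − Im⟨ξ_g, U_g ξ_h⟩. -/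
open scoped ComplexInnerProductSpace in
/-- Let `Γ` be a group, `k` a Hilbert space, `k̂ = ℂ ⊕ k` and
`Δ^{QS}` the projection of `k̂` onto the `k`-summand. If `ψ : Γ → B(k̂)` satisfies
`ψ_{gh} = ψ_g + ψ_h + ψ_g Δ^{QS} ψ_h`, `(ψ_g)* = ψ_{g⁻¹}` and `ψ_e = 0`, then there
are a unitary representation `U` of `Γ` on `k`, a map `ξ : Γ → k` and `λ : Γ → ℝ`
such that each `ψ_g` has the block matrix form
`[[iλ_g − ½‖ξ_g‖², −⟨ξ_g|U_g], [|ξ_g⟩, U_g − I]]`, with the cocycle relations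
`ξ_{gh} = ξ_g + U_g ξ_h` and `λ_{gh} = λ_g + λ_h − Im⟪ξ_g, U_g ξ_h⟫`. -/
theorem stmt_9 {Γ : Type*} [Group Γ]
    {k : Type*} [NormedAddCommGroup k] [InnerProductSpace ℂ k] [CompleteSpace k]
    (ψ : Γ → (WithLp 2 (ℂ × k) →L[ℂ] WithLp 2 (ℂ × k)))
    (Δqs : WithLp 2 (ℂ × k) →L[ℂ] WithLp 2 (ℂ × k))
    (hΔqs : ∀ p : WithLp 2 (ℂ × k),
      Δqs p = (WithLp.equiv 2 (ℂ × k)).symm (0, (WithLp.equiv 2 (ℂ × k) p).2))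
    (hmul : ∀ g h : Γ, ψ (g * h) = ψ g + ψ h + (ψ g).comp (Δqs.comp (ψ h)))
    (hstar : ∀ g : Γ, ContinuousLinearMap.adjoint (ψ g) = ψ g⁻¹)
    (hone : ψ 1 = 0) :
    ∃ (U : Γ → (k →L[ℂ] k)) (ξ : Γ → k) (lam : Γ → ℝ),
      (∀ g, (ContinuousLinearMap.adjoint (U g)).comp (U g) = ContinuousLinearMap.id ℂ k ∧
            (U g).comp (ContinuousLinearMap.adjoint (U g)) = ContinuousLinearMap.id ℂ k) ∧
      U 1 = ContinuousLinearMap.id ℂ k ∧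
      (∀ g h : Γ, U (g * h) = (U g).comp (U h)) ∧
      (∀ (g : Γ) (z : ℂ) (v : k),
        ψ g ((WithLp.equiv 2 (ℂ × k)).symm (z, v)) =
          (WithLp.equiv 2 (ℂ × k)).symm
            ((Complex.I * (lam g : ℂ) - ((‖ξ g‖ ^ 2 / 2 : ℝ) : ℂ)) * z - ⟪ξ g, U g v⟫,
             z • ξ g + U g v - v)) ∧
      (∀ g h : Γ, ξ (g * h) = ξ g + U g (ξ h)) ∧
      (∀ g h : Γ, lam (g * h) = lam g + lam h - (⟪ξ g, U g (ξ h)⟫ : ℂ).im) := by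
  classical
  let ι : k →L[ℂ] WithLp 2 (ℂ × k) :=
    ((WithLp.prodContinuousLinearEquiv 2 ℂ ℂ k).symm : (ℂ × k) →L[ℂ] WithLp 2 (ℂ × k)).comp
      (ContinuousLinearMap.inr ℂ ℂ k)
  let π : WithLp 2 (ℂ × k) →L[ℂ] k :=
    (ContinuousLinearMap.snd ℂ ℂ k).comp
      ((WithLp.prodContinuousLinearEquiv 2 ℂ ℂ k : WithLp 2 (ℂ × k) →L[ℂ] (ℂ × k)))
  set U : Γ → (k →L[ℂ] k) := fun g => π.comp ((ψ g).comp ι) + ContinuousLinearMap.id ℂ k with hUdef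
  set ξ : Γ → k := fun g => (ψ g (WithLp.toLp 2 ((1 : ℂ), (0 : k)))).snd with hξdef
  set A : Γ → ℂ := fun g => (ψ g (WithLp.toLp 2 ((1 : ℂ), (0 : k)))).fst with hAdef
  set lam : Γ → ℝ := fun g => (A g).im with hlamdef
  have hUv : ∀ (g : Γ) (v : k),
      U g v = (ψ g (WithLp.toLp 2 ((0 : ℂ), v))).snd + v := fun g v => rfl
  have hext : ∀ x y : WithLp 2 (ℂ × k), x.fst = y.fst → x.snd = y.snd → x = y :=
    fun x y h1 h2 => (WithLp.ext_iff 2).2 (Prod.ext h1 h2)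
  have hpair : ∀ (z : ℂ) (v : k), (WithLp.toLp 2 (z, v)) =
      z • (WithLp.toLp 2 ((1 : ℂ), (0 : k))) + (WithLp.toLp 2 ((0 : ℂ), v)) := by
    intro z v
    apply hext <;>
      simp [WithLp.add_fst, WithLp.add_snd, WithLp.smul_fst, WithLp.smul_snd]
  have hψadd : ∀ (g h : Γ) (p : WithLp 2 (ℂ × k)),
      ψ (g * h) p = ψ g p + ψ h p + ψ g (WithLp.toLp 2 ((0 : ℂ), (ψ h p).snd)) := by
    intro g h p
    rw [hmul g h]
    simp only [ContinuousLinearMap.add_apply, ContinuousLinearMap.comp_apply]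
    congr 1
    rw [hΔqs]
    rfl
  have hadj : ∀ (g : Γ) (x y : WithLp 2 (ℂ × k)), (⟪ψ g x, y⟫ : ℂ) = ⟪x, ψ g⁻¹ y⟫ := by
    intro g x y
    rw [← hstar g, ContinuousLinearMap.adjoint_inner_right]
  have hinner0 : ∀ (x : WithLp 2 (ℂ × k)) (v : k),
      (⟪x, (WithLp.toLp 2 ((0 : ℂ), v))⟫ : ℂ) = ⟪x.snd, v⟫ := by
    intro x v
    rw [WithLp.prod_inner_apply]
    simp
  have hξ1 : ξ 1 = 0 := by simp [hξdef, hone]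
  have hA1 : A 1 = 0 := by simp [hAdef, hone]
  have hUmul : ∀ g h : Γ, U (g * h) = (U g).comp (U h) := by
    intro g h
    ext v
    simp only [ContinuousLinearMap.comp_apply]
    rw [hUv, hUv, hUv, hψadd]
    have : (WithLp.toLp 2 ((0 : ℂ), (ψ h (WithLp.toLp 2 ((0:ℂ), v))).snd + v)) =
        (WithLp.toLp 2 ((0:ℂ), (ψ h (WithLp.toLp 2 ((0:ℂ), v))).snd)) +
        (WithLp.toLp 2 ((0:ℂ), v)) := by
      apply hext <;> simp [WithLp.add_fst, WithLp.add_snd]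
    rw [this, map_add]
    show (_ + _ + _ : WithLp 2 (ℂ × k)).snd + v = _
    rw [WithLp.add_snd, WithLp.add_snd, WithLp.add_snd]
    abel
  have hU1 : U 1 = ContinuousLinearMap.id ℂ k := by
    ext v
    rw [hUv, hone]
    show ((0 : WithLp 2 (ℂ × k) →L[ℂ] WithLp 2 (ℂ × k)) _).snd + v = v
    simp
  have hUinner : ∀ (g : Γ) (v w : k), (⟪U g⁻¹ v, w⟫ : ℂ) = ⟪v, U g w⟫ := by
    intro g v w
    rw [hUv, hUv, inner_add_left, inner_add_right]
    congr 1
    have h1 : (⟪(ψ g⁻¹ (WithLp.toLp 2 ((0:ℂ), v))).snd, w⟫ : ℂ) =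
        ⟪ψ g⁻¹ (WithLp.toLp 2 ((0:ℂ), v)), (WithLp.toLp 2 ((0:ℂ), w))⟫ :=
      (hinner0 _ _).symm
    rw [h1, hadj g⁻¹, inv_inv, WithLp.prod_inner_apply]
    simp
  have hUadj : ∀ g : Γ, ContinuousLinearMap.adjoint (U g) = U g⁻¹ := by
    intro g
    symm
    rw [ContinuousLinearMap.eq_adjoint_iff]
    intro v w
    exact hUinner g v w
  have hUunitary : ∀ g : Γ,
      (ContinuousLinearMap.adjoint (U g)).comp (U g) = ContinuousLinearMap.id ℂ k ∧
      (U g).comp (ContinuousLinearMap.adjoint (U g)) = ContinuousLinearMap.id ℂ k := by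
    intro g
    rw [hUadj g, ← hUmul, ← hUmul, inv_mul_cancel, mul_inv_cancel, hU1]
    exact ⟨rfl, rfl⟩
  have hξcoc : ∀ g h : Γ, ξ (g * h) = ξ g + U g (ξ h) := by
    intro g h
    rw [hUv]
    show (ψ (g * h) (WithLp.toLp 2 ((1:ℂ), (0:k)))).snd = _
    rw [hψadd, WithLp.add_snd, WithLp.add_snd]
    show ξ g + ξ h + (ψ g (WithLp.toLp 2 ((0:ℂ), ξ h))).snd = _
    abel
  have hB : ∀ (g : Γ) (v : k),
      (ψ g (WithLp.toLp 2 ((0:ℂ), v))).fst = ⟪ξ g⁻¹, v⟫ := by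
    intro g v
    have h1 := hadj g⁻¹ (WithLp.toLp 2 ((1:ℂ), (0:k))) (WithLp.toLp 2 ((0:ℂ), v))
    rw [inv_inv] at h1
    rw [WithLp.prod_inner_apply, WithLp.prod_inner_apply] at h1
    simp [RCLike.inner_apply] at h1
    exact h1.symm
  have hξinv : ∀ g : Γ, ξ g⁻¹ = -(U g⁻¹ (ξ g)) := by
    intro g
    have h0 : ξ g + U g (ξ g⁻¹) = 0 := by
      rw [← hξcoc, mul_inv_cancel, hξ1]
    have h2 : U g (ξ g⁻¹) = -ξ g := eq_neg_of_add_eq_zero_right h0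
    have h3 : U g⁻¹ (U g (ξ g⁻¹)) = ξ g⁻¹ := by
      rw [← ContinuousLinearMap.comp_apply, ← hUmul, inv_mul_cancel, hU1]
      rfl
    rw [← h3, h2, map_neg]
  have hBU : ∀ (g : Γ) (v : k),
      (ψ g (WithLp.toLp 2 ((0:ℂ), v))).fst = -⟪ξ g, U g v⟫ := by
    intro g v
    rw [hB, hξinv, inner_neg_left, hUinner]
  have hAcoc : ∀ g h : Γ, A (g * h) = A g + A h - ⟪ξ g, U g (ξ h)⟫ := by
    intro g h
    show (ψ (g * h) (WithLp.toLp 2 ((1:ℂ), (0:k)))).fst = _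
    rw [hψadd, WithLp.add_fst, WithLp.add_fst]
    show A g + A h + (ψ g (WithLp.toLp 2 ((0:ℂ), ξ h))).fst = _
    rw [hBU]
    ring
  have hAinv : ∀ g : Γ, A g⁻¹ = starRingEnd ℂ (A g) := by
    intro g
    have h1 := hadj g (WithLp.toLp 2 ((1:ℂ), (0:k))) (WithLp.toLp 2 ((1:ℂ), (0:k)))
    rw [WithLp.prod_inner_apply, WithLp.prod_inner_apply] at h1
    simp [RCLike.inner_apply] at h1
    exact h1.symm
  have hAre : ∀ g : Γ, (A g).re = -(‖ξ g‖ ^ 2 / 2) := by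
    intro g
    have h0 : A g + A g⁻¹ - ⟪ξ g, U g (ξ g⁻¹)⟫ = 0 := by
      rw [← hAcoc, mul_inv_cancel, hA1]
    have h2 : U g (ξ g⁻¹) = -ξ g := by
      rw [hξinv, map_neg, ← ContinuousLinearMap.comp_apply, ← hUmul,
        mul_inv_cancel, hU1]
      rfl
    rw [h2, inner_neg_right, hAinv] at h0
    have h4 : (⟪ξ g, ξ g⟫ : ℂ) = ((‖ξ g‖ ^ 2 : ℝ) : ℂ) := by
      rw [inner_self_eq_norm_sq_to_K]
      norm_cast
    have h3 : A g + starRingEnd ℂ (A g) + ((‖ξ g‖ ^ 2 : ℝ) : ℂ) = 0 := by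
      rw [← h4]
      linear_combination h0
    have h5 := congrArg Complex.re h3
    simp only [Complex.add_re, Complex.conj_re, Complex.ofReal_re, Complex.zero_re] at h5
    linarith
  have hAval : ∀ g : Γ, A g = Complex.I * (lam g : ℂ) - ((‖ξ g‖ ^ 2 / 2 : ℝ) : ℂ) := by
    intro g
    apply Complex.ext
    · simp only [Complex.sub_re, Complex.mul_re, Complex.I_re, Complex.I_im,
        Complex.ofReal_re, Complex.ofReal_im, hAre g]
      ring
    · simp only [Complex.sub_im, Complex.mul_im, Complex.I_re, Complex.I_im,
        Complex.ofReal_re, Complex.ofReal_im, hlamdef]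
      ring
  refine ⟨U, ξ, lam, hUunitary, hU1, hUmul, ?_, hξcoc, ?_⟩
  · intro g z v
    have hdecomp : ψ g ((WithLp.equiv 2 (ℂ × k)).symm (z, v)) =
        z • ψ g (WithLp.toLp 2 ((1:ℂ), (0:k))) +
          ψ g (WithLp.toLp 2 ((0:ℂ), v)) := by
      have h : (WithLp.equiv 2 (ℂ × k)).symm (z, v) = (WithLp.toLp 2 (z, v)) := rfl
      rw [h, hpair, map_add, map_smul]
    rw [hdecomp]
    apply hext
    · rw [WithLp.add_fst, WithLp.smul_fst, WithLp.equiv_symm_apply, WithLp.toLp_fst]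
      show z * A g + (ψ g (WithLp.toLp 2 ((0:ℂ), v))).fst =
        (Complex.I * (lam g : ℂ) - ((‖ξ g‖ ^ 2 / 2 : ℝ) : ℂ)) * z - ⟪ξ g, U g v⟫
      rw [hBU, hAval]
      ring
    · rw [WithLp.add_snd, WithLp.smul_snd, WithLp.equiv_symm_apply, WithLp.toLp_snd]
      show z • ξ g + (ψ g (WithLp.toLp 2 ((0:ℂ), v))).snd = z • ξ g + U g v - v
      rw [hUv]
      abel
  · intro g h
    have := congrArg Complex.im (hAcoc g h)
    simpa [hlamdef, Complex.sub_im] using this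
end

section
/- Conversely to the block-matrix decomposition: let Γ be a group, U a unitary representation of Γ on a Hilbert space k, ξ : Γ → k satisfying ξ_e = 0 and ξ_{gh} = ξ_g + U_g ξ_h, and λ : Γ → ℝ satisfying λ_e = 0 and λ_{gh} = λ_g + λ_h − Im⟨ξ_g, U_g ξ_h⟩. Define ψ_g ∈ B(ℂ ⊕ k) by the block matrix [[ iλ_g − ½‖ξ_g‖², −⟨ξ_g| U_g ], [ |ξ_g⟩, U_g − I_k ]]. Then ψ satisfies ψ_{gh} = ψ_g + ψ_h + ψ_g Δ^{QS} ψ_h, (ψ_g)* = ψ_{g⁻¹}, and ψ_e = 0, where Δ^{QS} is the projection of ℂ ⊕ k onto the k-summand. -/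
open scoped ComplexInnerProductSpace in
/-- Converse to the block-matrix decomposition. Let `Γ` be a group,
`U` a unitary representation of `Γ` on a Hilbert space `k`, `ξ : Γ → k` a
`U`-1-cocycle with `ξ_e = 0`, and `λ : Γ → ℝ` with `λ_e = 0` and
`λ_{gh} = λ_g + λ_h − Im⟪ξ_g, U_g ξ_h⟫`. If `ψ_g ∈ B(ℂ ⊕ k)` is given by the block
matrix `[[iλ_g − ½‖ξ_g‖², −⟨ξ_g|U_g], [|ξ_g⟩, U_g − I]]`, then
`ψ_{gh} = ψ_g + ψ_h + ψ_g Δ^{QS} ψ_h`, `(ψ_g)* = ψ_{g⁻¹}` and `ψ_e = 0`. -/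
theorem stmt_10 {Γ : Type*} [Group Γ]
    {k : Type*} [NormedAddCommGroup k] [InnerProductSpace ℂ k] [CompleteSpace k]
    (U : Γ → (k →L[ℂ] k))
    (hUunitary : ∀ g,
      (ContinuousLinearMap.adjoint (U g)).comp (U g) = ContinuousLinearMap.id ℂ k ∧
      (U g).comp (ContinuousLinearMap.adjoint (U g)) = ContinuousLinearMap.id ℂ k)
    (hU1 : U 1 = ContinuousLinearMap.id ℂ k)
    (hUmul : ∀ g h : Γ, U (g * h) = (U g).comp (U h))
    (ξ : Γ → k) (hξ1 : ξ 1 = 0)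
    (hξ : ∀ g h : Γ, ξ (g * h) = ξ g + U g (ξ h))
    (lam : Γ → ℝ) (hlam1 : lam 1 = 0)
    (hlam : ∀ g h : Γ, lam (g * h) = lam g + lam h - (⟪ξ g, U g (ξ h)⟫ : ℂ).im)
    (ψ : Γ → (WithLp 2 (ℂ × k) →L[ℂ] WithLp 2 (ℂ × k)))
    (hψ : ∀ (g : Γ) (z : ℂ) (v : k),
      ψ g ((WithLp.equiv 2 (ℂ × k)).symm (z, v)) =
        (WithLp.equiv 2 (ℂ × k)).symm
          ((Complex.I * (lam g : ℂ) - ((‖ξ g‖ ^ 2 / 2 : ℝ) : ℂ)) * z - ⟪ξ g, U g v⟫,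
           z • ξ g + U g v - v))
    (Δqs : WithLp 2 (ℂ × k) →L[ℂ] WithLp 2 (ℂ × k))
    (hΔqs : ∀ p : WithLp 2 (ℂ × k),
      Δqs p = (WithLp.equiv 2 (ℂ × k)).symm (0, (WithLp.equiv 2 (ℂ × k) p).2)) :
    (∀ g h : Γ, ψ (g * h) = ψ g + ψ h + (ψ g).comp (Δqs.comp (ψ h))) ∧
    (∀ g : Γ, ContinuousLinearMap.adjoint (ψ g) = ψ g⁻¹) ∧
    ψ 1 = 0 := by
  -- auxiliary facts
  have hUU : ∀ (g : Γ) (x : k), U g (U g⁻¹ x) = x := by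
    intro g x
    have := congrArg (fun T => T x) (hUmul g g⁻¹)
    simp only [mul_inv_cancel, hU1, ContinuousLinearMap.id_apply,
      ContinuousLinearMap.comp_apply] at this
    exact this.symm
  have hUU' : ∀ (g : Γ) (x : k), U g⁻¹ (U g x) = x := by
    intro g x
    have := hUU g⁻¹ x
    rwa [inv_inv] at this
  have hUinner : ∀ (g : Γ) (x y : k), (⟪U g x, U g y⟫ : ℂ) = ⟪x, y⟫ := by
    intro g x y
    have h1 := congrArg (fun T => T x) (hUunitary g).1
    simp only [ContinuousLinearMap.comp_apply, ContinuousLinearMap.id_apply] at h1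
    rw [← ContinuousLinearMap.adjoint_inner_left, h1]
  have hnormsq : ∀ (g : Γ) (x : k), ‖U g x‖ ^ 2 = ‖x‖ ^ 2 := by
    intro g x
    rw [← @inner_self_eq_norm_sq ℂ, ← @inner_self_eq_norm_sq ℂ, hUinner]
  have hξinv : ∀ g : Γ, ξ g⁻¹ = -(U g⁻¹ (ξ g)) := by
    intro g
    have := hξ g⁻¹ g
    rw [inv_mul_cancel, hξ1] at this
    exact eq_neg_of_add_eq_zero_left this.symm
  have hlaminv : ∀ g : Γ, lam g⁻¹ = -lam g := by
    intro g
    have := hlam g g⁻¹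
    rw [mul_inv_cancel, hlam1, hξinv g, map_neg, hUU] at this
    have him : (⟪ξ g, ξ g⟫ : ℂ).im = 0 := by
      exact inner_self_im (𝕜 := ℂ) (ξ g)
    rw [inner_neg_right] at this
    simp only [Complex.neg_im, him, neg_zero, sub_zero] at this
    linarith
  have hnξinv : ∀ g : Γ, ‖ξ g⁻¹‖ ^ 2 = ‖ξ g‖ ^ 2 := by
    intro g
    rw [hξinv, norm_neg, hnormsq]
  -- extensionality helper
  have hext : ∀ (T S : WithLp 2 (ℂ × k) →L[ℂ] WithLp 2 (ℂ × k)),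
      (∀ (z : ℂ) (v : k), T ((WithLp.equiv 2 (ℂ × k)).symm (z, v)) =
        S ((WithLp.equiv 2 (ℂ × k)).symm (z, v))) → T = S := by
    intro T S h
    ext x
    have := h (WithLp.equiv 2 (ℂ × k) x).1 (WithLp.equiv 2 (ℂ × k) x).2
    rwa [show (WithLp.equiv 2 (ℂ × k)).symm ((WithLp.equiv 2 (ℂ × k) x).1,
      (WithLp.equiv 2 (ℂ × k) x).2) = x from (WithLp.equiv 2 (ℂ × k)).symm_apply_apply x] at this
  refine ⟨?_, ?_, ?_⟩
  · -- cocycle identity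
    intro g h
    apply hext
    intro z v
    have hΔ' : ∀ (p : ℂ) (q : k), Δqs ((WithLp.equiv 2 (ℂ × k)).symm (p, q)) =
        (WithLp.equiv 2 (ℂ × k)).symm (0, q) := by
      intro p q
      rw [hΔqs]
      simp
    simp only [ContinuousLinearMap.add_apply, ContinuousLinearMap.comp_apply,
      hψ, hΔ', hξ g h, hUmul g h]
    simp only [WithLp.equiv_symm_apply, ← WithLp.toLp_add]
    refine congrArg _ ?_
    simp only [Prod.mk_add_mk, Prod.mk.injEq]
    have hnorm : ‖ξ g + U g (ξ h)‖ ^ 2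
        = ‖ξ g‖ ^ 2 + 2 * (⟪ξ g, U g (ξ h)⟫ : ℂ).re + ‖ξ h‖ ^ 2 := by
      rw [@norm_add_sq ℂ, hnormsq]
      rfl
    refine ⟨?_, ?_⟩
    · simp only [hlam g h, hnorm, ContinuousLinearMap.comp_apply, map_add, map_sub, map_smul,
        inner_add_left, inner_add_right, inner_sub_right, inner_smul_right, hUinner]
      have hc : (⟪ξ g, U g (ξ h)⟫ : ℂ)
          = ((⟪ξ g, U g (ξ h)⟫ : ℂ).re : ℂ) + ((⟪ξ g, U g (ξ h)⟫ : ℂ).im : ℂ) * Complex.I := by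
        rw [← Complex.re_add_im (⟪ξ g, U g (ξ h)⟫ : ℂ)]
        simp
      rw [hc]
      push_cast
      simp only [Complex.add_im, Complex.add_re, Complex.mul_im, Complex.mul_re,
        Complex.I_re, Complex.I_im, Complex.ofReal_re, Complex.ofReal_im]
      push_cast
      ring
    · simp only [ContinuousLinearMap.comp_apply, map_add, map_sub, map_smul]
      module
  · -- adjoint
    intro g
    rw [eq_comm, ContinuousLinearMap.eq_adjoint_iff]
    intro x y
    have hx : x = (WithLp.equiv 2 (ℂ × k)).symm
        ((WithLp.equiv 2 (ℂ × k) x).1, (WithLp.equiv 2 (ℂ × k) x).2) :=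
      ((WithLp.equiv 2 (ℂ × k)).symm_apply_apply x).symm
    have hy : y = (WithLp.equiv 2 (ℂ × k)).symm
        ((WithLp.equiv 2 (ℂ × k) y).1, (WithLp.equiv 2 (ℂ × k) y).2) :=
      ((WithLp.equiv 2 (ℂ × k)).symm_apply_apply y).symm
    rw [hx, hy, hψ, hψ]
    set z := (WithLp.equiv 2 (ℂ × k) x).1
    set v := (WithLp.equiv 2 (ℂ × k) x).2
    set w := (WithLp.equiv 2 (ℂ × k) y).1
    set u := (WithLp.equiv 2 (ℂ × k) y).2
    have e1 : (⟪ξ g⁻¹, U g⁻¹ v⟫ : ℂ) = -⟪ξ g, v⟫ := by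
      rw [hξinv, inner_neg_left, hUinner]
    have e2 : (⟪ξ g⁻¹, u⟫ : ℂ) = -⟪ξ g, U g u⟫ := by
      rw [hξinv, inner_neg_left, ← hUinner g⁻¹ (ξ g) (U g u), hUU']
    have e3 : (⟪U g⁻¹ v, u⟫ : ℂ) = ⟪v, U g u⟫ := by
      rw [← hUinner g⁻¹ v (U g u), hUU']
    simp only [WithLp.prod_inner_apply, WithLp.equiv_symm_apply, WithLp.ofLp_toLp,
      inner_add_left, inner_sub_left, inner_smul_left, inner_add_right, inner_sub_right,
      inner_smul_right, e1, e2, e3, hlaminv, hnξinv]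
    simp only [RCLike.inner_apply, map_sub, map_add, map_mul, map_neg, Complex.conj_I,
      Complex.conj_ofReal, Complex.ofReal_neg, inner_conj_symm]
    ring
  · -- ψ 1 = 0
    apply hext
    intro z v
    rw [hψ]
    simp [hξ1, hlam1, hU1]
end

section
/- Let A be a unital C*-algebra with character χ, let h be a Hilbert space, π : A → B(h) a unital *-homomorphism and ξ ∈ h. Define φ : A → B(ℂ ⊕ h) by φ(a) = [⟨ξ|; I_h] (π(a) − χ(a) I_h) [|ξ⟩, I_h], i.e. in block form φ(a) = [[ ⟨ξ,(π(a)−χ(a))ξ⟩, ⟨ξ|(π(a)−χ(a)) ], [ (π(a)−χ(a))|ξ⟩, π(a)−χ(a)I_h ]]. Then φ satisfies the χ-structure relation φ(a*b) = φ(a)* χ(b) + conjugate(χ(a)) φ(b) + φ(a)* Δ φ(b) for all a, b ∈ A, where Δ ∈ B(ℂ ⊕ h) is the projection onto the h-summand; moreover φ(1) = 0. -/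
open scoped ComplexInnerProductSpace in
/-- Let `A` be a unital C*-algebra with character `χ`, `π : A → B(h)` a
unital *-homomorphism and `ξ ∈ h`. The map
`φ(a) = [⟨ξ|; I] (π(a) − χ(a)) [|ξ⟩, I]` on `ℂ ⊕ h`, i.e. in block form
`φ(a)(z,v) = (⟨ξ,(π(a)−χ(a))ξ⟩z + ⟨ξ|(π(a)−χ(a))v, z(π(a)−χ(a))ξ + (π(a)−χ(a))v)`,
satisfies the `χ`-structure relation
`φ(a*b) = φ(a)* χ(b) + conj(χ(a)) φ(b) + φ(a)* Δ φ(b)` and `φ(1) = 0`. -/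
theorem stmt_12 {A : Type*} [NormedRing A] [StarRing A] [CStarRing A]
    [NormedAlgebra ℂ A] [CompleteSpace A] [StarModule ℂ A]
    {h : Type*} [NormedAddCommGroup h] [InnerProductSpace ℂ h] [CompleteSpace h]
    (χ : A →ₗ[ℂ] ℂ) (hχmul : ∀ a b, χ (a * b) = χ a * χ b) (hχne : χ ≠ 0)
    (π : A →⋆ₐ[ℂ] (h →L[ℂ] h)) (ξ : h)
    (φ : A → (WithLp 2 (ℂ × h) →L[ℂ] WithLp 2 (ℂ × h)))
    (hφ : ∀ (a : A) (z : ℂ) (v : h),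
      φ a ((WithLp.equiv 2 (ℂ × h)).symm (z, v)) =
        (WithLp.equiv 2 (ℂ × h)).symm
          (⟪ξ, π a ξ - χ a • ξ⟫ * z + ⟪ξ, π a v - χ a • v⟫,
           z • (π a ξ - χ a • ξ) + (π a v - χ a • v)))
    (Δqs : WithLp 2 (ℂ × h) →L[ℂ] WithLp 2 (ℂ × h))
    (hΔqs : ∀ p : WithLp 2 (ℂ × h),
      Δqs p = (WithLp.equiv 2 (ℂ × h)).symm (0, (WithLp.equiv 2 (ℂ × h) p).2)) :
    (∀ a b : A, φ (star a * b) =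
        χ b • ContinuousLinearMap.adjoint (φ a)
        + starRingEnd ℂ (χ a) • φ b
        + (ContinuousLinearMap.adjoint (φ a)).comp (Δqs.comp (φ b))) ∧
    φ 1 = 0 := by
  set e := WithLp.equiv 2 (ℂ × h) with he
  have hfst : ∀ x : ℂ × h, (e.symm x).fst = x.1 := fun _ => rfl
  have hsnd : ∀ x : ℂ × h, (e.symm x).snd = x.2 := fun _ => rfl
  have heq : ∀ x : ℂ × h, e (e.symm x) = x := fun _ => rfl
  have hadd : ∀ x y : ℂ × h, e.symm x + e.symm y = e.symm (x + y) := fun _ _ => rfl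
  have hsmul : ∀ (c : ℂ) (x : ℂ × h), c • e.symm x = e.symm (c • x) := fun _ _ => rfl
  -- χ is unital
  have hχ1 : χ 1 = 1 := by
    obtain ⟨a, ha⟩ : ∃ a, χ a ≠ 0 := by
      by_contra hc; push_neg at hc
      exact hχne (by ext a; simpa using hc a)
    have h1 : χ a * χ 1 = χ a * 1 := by
      rw [← hχmul, mul_one, mul_one]
    exact mul_left_cancel₀ ha h1
  -- χ is star-preserving (automatic for characters of C*-algebras)
  have hχstar : ∀ a, χ (star a) = starRingEnd ℂ (χ a) := by
    letI : CStarAlgebra A := ⟨⟩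
    let χalg : A →ₐ[ℂ] ℂ := AlgHom.ofLinearMap χ hχ1 hχmul
    letI := AlgHomClass.instStarHomClass (F := A →ₐ[ℂ] ℂ) (A := A)
    exact fun a => map_star χalg a
  -- the operator T a = π a - χ a • 1
  set T : A → (h →L[ℂ] h) := fun a => π a - χ a • 1 with hTdef
  have hT : ∀ (a : A) (x : h), π a x - χ a • x = T a x := by
    intro a x
    simp [hTdef]
  have hφ' : ∀ (a : A) (z : ℂ) (v : h),
      φ a (e.symm (z, v)) =
        e.symm (⟪ξ, T a ξ⟫ * z + ⟪ξ, T a v⟫, z • T a ξ + T a v) := by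
    intro a z v
    simp only [← hT]
    exact hφ a z v
  have hTadj : ∀ a, ContinuousLinearMap.adjoint (T a) = T (star a) := by
    intro a
    rw [← ContinuousLinearMap.star_eq_adjoint]
    show star (π a - χ a • 1) = π (star a) - χ (star a) • 1
    rw [star_sub, star_smul, star_one, ← map_star π, hχstar, starRingEnd_apply]
  have hTL : ∀ (a : A) (x y : h), ⟪T (star a) x, y⟫ = ⟪x, T a y⟫ := by
    intro a x y
    rw [← hTadj]
    exact ContinuousLinearMap.adjoint_inner_left _ _ _
  have hTR : ∀ (a : A) (x y : h), ⟪x, T (star a) y⟫ = ⟪T a x, y⟫ := by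
    intro a x y
    rw [← hTadj]
    exact ContinuousLinearMap.adjoint_inner_right _ _ _
  -- adjoint of φ a is φ (star a)
  have hadj : ∀ a, ContinuousLinearMap.adjoint (φ a) = φ (star a) := by
    intro a
    refine ((ContinuousLinearMap.eq_adjoint_iff (φ (star a)) (φ a)).mpr ?_).symm
    intro x y
    rw [show x = e.symm (x.fst, x.snd) from rfl, show y = e.symm (y.fst, y.snd) from rfl,
      hφ' a, hφ' (star a)]
    simp only [WithLp.prod_inner_apply, WithLp.ofLp_fst, WithLp.ofLp_snd, hfst, hsnd, RCLike.inner_apply,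
      inner_add_left, inner_add_right, inner_smul_left, inner_smul_right,
      map_add, map_mul, inner_conj_symm]
    simp only [← starRingEnd_apply, inner_conj_symm, hTL, hTR]
    ring
  constructor
  · intro a b
    have key : ∀ x : h, T (star a) (T b x) =
        T (star a * b) x - χ b • T (star a) x - (starRingEnd ℂ (χ a)) • T b x := by
      intro x
      simp only [hTdef, ContinuousLinearMap.sub_apply, ContinuousLinearMap.smul_apply,
        ContinuousLinearMap.one_apply, map_sub, map_smul, map_mul, hχmul, hχstar,
        ContinuousLinearMap.mul_apply]
      module
    ext p
    rw [show p = e.symm (p.fst, p.snd) from rfl]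
    simp only [ContinuousLinearMap.add_apply, ContinuousLinearMap.smul_apply,
      ContinuousLinearMap.comp_apply, hadj, hφ' b, hΔqs, heq, hφ' (star a),
      hφ' (star a * b), hsnd, hadd, hsmul]
    refine congrArg e.symm (Prod.ext ?_ ?_)
    · simp only [Prod.smul_mk, Prod.mk_add_mk, smul_eq_mul]
      simp only [key, map_add, map_smul, inner_sub_right, inner_add_right, inner_smul_right]
      ring
    · simp only [Prod.smul_mk, Prod.mk_add_mk]
      simp only [key, map_add, map_smul]
      module
  · ext p
    rw [show p = e.symm (p.fst, p.snd) from rfl, hφ' 1]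
    have hT1 : T 1 = 0 := by
      ext x
      show π 1 x - χ 1 • x = 0
      rw [map_one, hχ1, one_smul, ContinuousLinearMap.one_apply, sub_self]
    simp [hT1]
    rfl
end
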